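/- arXiv:1801.05577 — 6 statements merged into one kernel-verified Lean document; each statement's English description precedes it below -/
import Mathlib

section
/- Let 1 ≤ d ≤ n be integers and let A ∈ 𝒜_{n,d}. Then the number |F_A| of quadruples (i,j,k,ℓ) in which a simple switching can be performed on A satisfies n(n−d)d² − nd(d−1)² ≤ |F_A| ≤ n(n−d)d² (the left-hand side interpreted as an integer, possibly negative). -/
open Matrix

/-- `𝒜_{n,d}`: 0/1 matrices with exactly `d` ones in every row and column. -/
def IsRegAdj (n d : ℕ) (A : Matrix (Fin n) (Fin n) ℝ) : Prop :=
  (∀ i j, A i j = 0 ∨ A i j = 1) ∧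
  (∀ i, {j : Fin n | A i j = 1}.ncard = d) ∧
  (∀ j, {i : Fin n | A i j = 1}.ncard = d)

/-- A simple switching can be performed in `(i, j, k, l)`. -/
def CanSwitch {n : ℕ} (A : Matrix (Fin n) (Fin n) ℝ) (i j k l : Fin n) : Prop :=
  A i k = 1 ∧ A j l = 1 ∧ A i l = 0 ∧ A j k = 0

/-- The matrix obtained from `A` by the simple switching in `(i, j, k, l)`. -/
def switch {n : ℕ} (A : Matrix (Fin n) (Fin n) ℝ) (i j k l : Fin n) :
    Matrix (Fin n) (Fin n) ℝ :=
  Matrix.of fun s t =>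
    if (s = i ∧ t = k) ∨ (s = j ∧ t = l) then 0
    else if (s = i ∧ t = l) ∨ (s = j ∧ t = k) then 1
    else A s t

/-- `F_{i,j}(A)`: the span of the rows of `A` other than the `i`-th and the `j`-th,
together with `R_i + R_j`. -/
def rowSpanF {n : ℕ} (A : Matrix (Fin n) (Fin n) ℝ) (i j : Fin n) :
    Submodule ℝ (Fin n → ℝ) :=
  Submodule.span ℝ (insert (A i + A j) {r : Fin n → ℝ | ∃ s, s ≠ i ∧ s ≠ j ∧ r = A s})

/-- Orthogonal complement w.r.t. the standard inner product on `ℝⁿ`. -/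
def perp {n : ℕ} (F : Submodule ℝ (Fin n → ℝ)) : Submodule ℝ (Fin n → ℝ) where
  carrier := {x | ∀ v ∈ F, v ⬝ᵥ x = 0}
  zero_mem' := by intro v hv; simp
  add_mem' := by intro a b ha hb v hv; simp [dotProduct_add, ha v hv, hb v hv]
  smul_mem' := by intro c x hx v hv; simp [dotProduct_smul, hx v hv]

/-- `A` is `β`-delocalized: no level set of a nonzero null vector (of `A` or `Aᵀ`)
has more than `β` coordinates. -/
def Delocalized {n : ℕ} (β : ℝ) (A : Matrix (Fin n) (Fin n) ℝ) : Prop :=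
  ∀ x : Fin n → ℝ, x ≠ 0 →
    (x ∈ LinearMap.ker A.mulVecLin ∨ x ∈ LinearMap.ker Aᵀ.mulVecLin) →
    ∀ lam : ℝ, ({i : Fin n | x i = lam}.ncard : ℝ) ≤ β

/-!
Write `a k l` for the number of rows of `A` with a one in column `k` and a zero in column `l`.
A switching `(i, j, k, l)` is a choice of one such row `i` for `(k, l)` and one such row `j` for
`(l, k)`, so `|F_A| = ∑ a k l * a l k`. Since all columns contain `d` ones, `a k l = a l k`, hence
`|F_A| = ∑ (a k l)²`; moreover `a k k = 0` and every row of `a` sums to `d (n - d)`.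
The upper bound follows from `a k l ≤ d`, the lower bound from `(d - a) (d - 1 - a) ≥ 0`,
valid for every integer `a`, summed over `l ≠ k`.
-/

open Finset

theorem card_filter_eq_zero_of_zero_or_one {ι : Type*} [Fintype ι] (a : ι → ℝ)
    (h01 : ∀ l, a l = 0 ∨ a l = 1) : #{l | a l = 0} = Fintype.card ι - #{l | a l = 1} := by
  have hne : ∀ l, ¬a l = 1 ↔ a l = 0 := fun l => by
    rcases h01 l with h | h <;> simp [h]
  have := card_filter_add_card_filter_not (s := univ) (fun l => a l = 1)
  simp only [hne, card_univ] at this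
  omega

section ColumnDifferences

variable {m ι : Type*} [Fintype m]

noncomputable def colDiff (A : Matrix m ι ℝ) (k l : ι) : ℕ := #{i | A i k = 1 ∧ A i l = 0}

theorem colDiff_self (A : Matrix m ι ℝ) (k : ι) : colDiff A k k = 0 := by
  simp +contextual [colDiff]

theorem colDiff_add_card_filter_and {A : Matrix m ι ℝ} (h01 : ∀ i j, A i j = 0 ∨ A i j = 1)
    (k l : ι) : colDiff A k l + #{i | A i k = 1 ∧ A i l = 1} = #{i | A i k = 1} := by
  have hne : ∀ i, ¬A i l = 0 ↔ A i l = 1 := fun i => by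
    rcases h01 i l with h | h <;> simp [h]
  rw [colDiff, ← filter_filter, ← filter_filter, ← card_filter_add_card_filter_not
    (s := {i | A i k = 1}) (fun i => A i l = 0)]
  simp only [hne]

theorem colDiff_le_card_filter {A : Matrix m ι ℝ} (h01 : ∀ i j, A i j = 0 ∨ A i j = 1)
    (k l : ι) : colDiff A k l ≤ #{i | A i k = 1} :=
  Nat.le.intro (colDiff_add_card_filter_and h01 k l)

theorem colDiff_comm {A : Matrix m ι ℝ} (h01 : ∀ i j, A i j = 0 ∨ A i j = 1) {k l : ι}
    (hkl : #{i | A i k = 1} = #{i | A i l = 1}) : colDiff A k l = colDiff A l k := by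
  have hk := colDiff_add_card_filter_and h01 k l
  have hl := colDiff_add_card_filter_and h01 l k
  simp only [and_comm (a := A _ l = 1)] at hl
  omega

theorem sum_colDiff [Fintype ι] (A : Matrix m ι ℝ) (k : ι) :
    ∑ l, colDiff A k l = ∑ i with A i k = 1, #{l | A i l = 0} := by
  classical
  have := sum_card_bipartiteAbove_eq_sum_card_bipartiteBelow
    (s := {i | A i k = 1}) (t := univ) (r := fun i l => A i l = 0)
  simpa only [colDiff, bipartiteAbove, bipartiteBelow, filter_filter] using this.symm

theorem sum_colDiff_of_regular [Fintype ι] {A : Matrix m ι ℝ} {d : ℕ}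
    (h01 : ∀ i j, A i j = 0 ∨ A i j = 1) (hrow : ∀ i, #{l | A i l = 1} = d) {k : ι}
    (hk : #{i | A i k = 1} = d) : ∑ l, colDiff A k l = d * (Fintype.card ι - d) := by
  rw [sum_colDiff, sum_const_nat fun i _ => ?_, hk]
  rw [card_filter_eq_zero_of_zero_or_one _ (h01 i), hrow]

end ColumnDifferences

theorem le_sum_sq_of_apply_eq_zero {ι : Type*} [Fintype ι] (a : ι → ℤ) (d : ℤ) {k : ι}
    (hk : a k = 0) :
    d * (d - 1) * (1 - Fintype.card ι) + (2 * d - 1) * ∑ l, a l ≤ ∑ l, a l ^ 2 := by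
  have hprod_nonneg (x : ℤ) : 0 ≤ x * (x - 1) := by
    rcases le_or_gt x 0 with h | h <;> nlinarith
  have key : d * (d - 1) ≤ ∑ l, (d - a l) * (d - a l - 1) := by
    simpa [hk] using single_le_sum (fun l _ => hprod_nonneg (d - a l)) (mem_univ k)
  have expand : ∑ l, (d - a l) * (d - a l - 1) =
      Fintype.card ι * (d * (d - 1)) - (2 * d - 1) * ∑ l, a l + ∑ l, a l ^ 2 := by
    rw [mul_sum, ← card_univ, ← nsmul_eq_mul, ← sum_const, ← sum_sub_distrib, ← sum_add_distrib]
    exact sum_congr rfl fun l _ => by ring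
  linarith

theorem IsRegAdj.card_row {n d : ℕ} {A : Matrix (Fin n) (Fin n) ℝ} (hA : IsRegAdj n d A)
    (i : Fin n) : #{j | A i j = 1} = d := by
  rw [← hA.2.1 i, Set.ncard_eq_toFinset_card', Set.toFinset_ofPred]

theorem IsRegAdj.card_col {n d : ℕ} {A : Matrix (Fin n) (Fin n) ℝ} (hA : IsRegAdj n d A)
    (j : Fin n) : #{i | A i j = 1} = d := by
  rw [← hA.2.2 j, Set.ncard_eq_toFinset_card', Set.toFinset_ofPred]

theorem ncard_canSwitch {n : ℕ} (A : Matrix (Fin n) (Fin n) ℝ) :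
    {q : Fin n × Fin n × Fin n × Fin n | CanSwitch A q.1 q.2.1 q.2.2.1 q.2.2.2}.ncard =
      ∑ k, ∑ l, colDiff A k l * colDiff A l k := by
  let e : {q : Fin n × Fin n × Fin n × Fin n // CanSwitch A q.1 q.2.1 q.2.2.1 q.2.2.2} ≃
      Σ kl : Fin n × Fin n, {i // A i kl.1 = 1 ∧ A i kl.2 = 0} ×
        {j // A j kl.2 = 1 ∧ A j kl.1 = 0} :=
    { toFun := fun ⟨⟨i, j, k, l⟩, h⟩ => ⟨(k, l), ⟨i, h.1, h.2.2.1⟩, ⟨j, h.2.1, h.2.2.2⟩⟩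
      invFun := fun ⟨(k, l), ⟨i, hi⟩, ⟨j, hj⟩⟩ => ⟨⟨i, j, k, l⟩, hi.1, hj.1, hi.2, hj.2⟩
      left_inv := fun _ => rfl
      right_inv := fun _ => rfl }
  rw [← Nat.card_coe_set_eq, Set.coe_ofPred, Nat.card_congr e, Nat.card_sigma,
    Fintype.sum_prod_type]
  simp only [Nat.card_eq_fintype_card, Fintype.card_prod, Fintype.card_subtype, colDiff]

theorem IsRegAdj.bounds_sum_colDiff_sq {n d : ℕ} {A : Matrix (Fin n) (Fin n) ℝ}
    (hA : IsRegAdj n d A) (hdn : d ≤ n) (k : Fin n) :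
    (d : ℤ) ^ 2 * (n - d) - d * (d - 1) ^ 2 ≤ ∑ l, (colDiff A k l : ℤ) ^ 2 ∧
      ∑ l, (colDiff A k l : ℤ) ^ 2 ≤ (d : ℤ) ^ 2 * (n - d) := by
  have hsum : ∑ l, (colDiff A k l : ℤ) = d * (n - d) := by
    have := sum_colDiff_of_regular hA.1 hA.card_row (hA.card_col k)
    rw [Fintype.card_fin] at this
    rw [← Nat.cast_sub hdn, ← Nat.cast_mul, ← this, Nat.cast_sum]
  constructor
  · have := le_sum_sq_of_apply_eq_zero (fun l => (colDiff A k l : ℤ)) d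
      (k := k) (by rw [colDiff_self, Nat.cast_zero])
    rw [Fintype.card_fin, hsum] at this
    linear_combination this
  · calc ∑ l, (colDiff A k l : ℤ) ^ 2 ≤ ∑ l, d * (colDiff A k l : ℤ) :=
          sum_le_sum fun l _ => by
            have hle : (colDiff A k l : ℤ) ≤ d := by
              exact_mod_cast hA.card_col k ▸ colDiff_le_card_filter hA.1 k l
            nlinarith [Int.natCast_nonneg (colDiff A k l)]
      _ = (d : ℤ) ^ 2 * (n - d) := by rw [← mul_sum, hsum]; ring

theorem stmt_3_general (n d : ℕ) (hdn : d ≤ n)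
    (A : Matrix (Fin n) (Fin n) ℝ) (hA : IsRegAdj n d A) :
    (n : ℤ) * ((n : ℤ) - d) * d ^ 2 - n * d * ((d : ℤ) - 1) ^ 2 ≤
      ({q : Fin n × Fin n × Fin n × Fin n |
          CanSwitch A q.1 q.2.1 q.2.2.1 q.2.2.2}.ncard : ℤ) ∧
    ({q : Fin n × Fin n × Fin n × Fin n |
        CanSwitch A q.1 q.2.1 q.2.2.1 q.2.2.2}.ncard : ℤ) ≤
      (n : ℤ) * ((n : ℤ) - d) * d ^ 2 := by
  have hcount : ({q : Fin n × Fin n × Fin n × Fin n |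
      CanSwitch A q.1 q.2.1 q.2.2.1 q.2.2.2}.ncard : ℤ) = ∑ k, ∑ l, (colDiff A k l : ℤ) ^ 2 := by
    rw [ncard_canSwitch]
    push_cast
    refine sum_congr rfl fun k _ => sum_congr rfl fun l _ => ?_
    rw [colDiff_comm hA.1 (k := l) (by rw [hA.card_col, hA.card_col]), sq]
  have hrows := hA.bounds_sum_colDiff_sq hdn
  rw [hcount]
  constructor
  · calc _ = ∑ _k : Fin n, ((d : ℤ) ^ 2 * (n - d) - d * (d - 1) ^ 2) := by
          rw [sum_const, card_univ, Fintype.card_fin, nsmul_eq_mul]; ring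
      _ ≤ _ := sum_le_sum fun k _ => (hrows k).1
  · calc _ ≤ ∑ _k : Fin n, (d : ℤ) ^ 2 * (n - d) := sum_le_sum fun k _ => (hrows k).2
      _ = _ := by rw [sum_const, card_univ, Fintype.card_fin, nsmul_eq_mul]; ring

/-- bounds on the number of possible switchings. -/
theorem stmt_3 (n d : ℕ) (hd : 1 ≤ d) (hdn : d ≤ n)
    (A : Matrix (Fin n) (Fin n) ℝ) (hA : IsRegAdj n d A) :
    (n : ℤ) * ((n : ℤ) - d) * d ^ 2 - n * d * ((d : ℤ) - 1) ^ 2 ≤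
      ({q : Fin n × Fin n × Fin n × Fin n |
          CanSwitch A q.1 q.2.1 q.2.2.1 q.2.2.2}.ncard : ℤ) ∧
    ({q : Fin n × Fin n × Fin n × Fin n |
        CanSwitch A q.1 q.2.1 q.2.2.1 q.2.2.2}.ncard : ℤ) ≤
      (n : ℤ) * ((n : ℤ) - d) * d ^ 2 :=
  stmt_3_general n d hdn A hA
end

section
/- Let d < n be positive integers, let β ≤ n be a real number, and let A ∈ 𝒜_{n,d} be β-delocalized with rank A ≤ n−1. Then |K_A| ≥ (n − β)², where K_A = {(i,j) ∈ [n]² : i ≠ j and ker A = F_{i,j}(A)^⊥}. -/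
open Matrix

/-!
Since `A` is singular there is `y ≠ 0` with `yᵀ A = 0`, i.e. `∑ₛ y_s R_s = 0`. Whenever
`y_i ≠ y_j`, this relation recovers `R_i` and `R_j` from `F_{i,j}(A)`, so `F_{i,j}(A)` is the
whole row space and its orthogonal complement is `ker A`. By delocalization every level set of
`y` has at most `β` elements, so each `i` has at least `n - β` partners `j` with `y_j ≠ y_i`,
giving `n (n - β) ≥ (n - β)²` pairs in `K_A`.
-/

open Finset

lemma mem_perp_span_iff {n : ℕ} {s : Set (Fin n → ℝ)} {x : Fin n → ℝ} :
    x ∈ perp (Submodule.span ℝ s) ↔ ∀ v ∈ s, v ⬝ᵥ x = 0 := by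
  refine ⟨fun hx v hv => hx v (Submodule.subset_span hv), fun hx v hv => ?_⟩
  induction hv using Submodule.span_induction with
  | mem v hv => exact hx v hv
  | zero => exact zero_dotProduct x
  | add a b _ _ ha hb => rw [add_dotProduct, ha, hb, add_zero]
  | smul c a _ ha => rw [smul_dotProduct, ha, smul_zero]

lemma ker_mulVecLin_eq_perp_span_rows {m n : ℕ} (A : Matrix (Fin m) (Fin n) ℝ) :
    LinearMap.ker A.mulVecLin = perp (Submodule.span ℝ (Set.range A)) := by
  ext x
  rw [mem_perp_span_iff, LinearMap.mem_ker, mulVecLin_apply, funext_iff]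
  exact ⟨fun h _ ⟨s, hs⟩ => hs ▸ h s, fun h s => h _ ⟨s, rfl⟩⟩

lemma rowSpanF_eq_span_rows {n : ℕ} {A : Matrix (Fin n) (Fin n) ℝ} {y : Fin n → ℝ}
    (hy : y ᵥ* A = 0) {i j : Fin n} (hij : y i ≠ y j) :
    rowSpanF A i j = Submodule.span ℝ (Set.range A) := by
  set F := rowSpanF A i j
  have hAij : A i + A j ∈ F := Submodule.subset_span (Set.mem_insert _ _)
  have hA : ∀ s, s ≠ i → s ≠ j → A s ∈ F := fun s hi hj =>
    Submodule.subset_span (Set.mem_insert_of_mem _ ⟨s, hi, hj, rfl⟩)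
  -- Modulo `F` we have `A i = -A j` and `A s = 0` for all other `s`,
  -- so `y ᵥ* A = 0` becomes `(y j - y i) • A j = 0`.
  have hAj : A j ∈ F := by
    have hi : F.mkQ (A i) = -F.mkQ (A j) := by
      rw [eq_neg_iff_add_eq_zero, ← map_add, Submodule.mkQ_apply,
        Submodule.Quotient.mk_eq_zero]
      exact hAij
    have hdep : ∑ s, y s • F.mkQ (A s) = 0 := by
      rw [← map_zero F.mkQ, ← hy, vecMul_eq_sum, map_sum]
      simp only [map_smul]
    rw [Fintype.sum_eq_add i j (ne_of_apply_ne y hij) fun s ⟨hsi, hsj⟩ => by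
      rw [Submodule.mkQ_apply, (Submodule.Quotient.mk_eq_zero F).2 (hA s hsi hsj), smul_zero],
      hi, smul_neg, neg_add_eq_sub, ← sub_smul, smul_eq_zero] at hdep
    rw [← Submodule.Quotient.mk_eq_zero, ← Submodule.mkQ_apply]
    exact hdep.resolve_left (sub_ne_zero.2 hij.symm)
  have hAi : A i ∈ F := by simpa using F.sub_mem hAij hAj
  refine le_antisymm (Submodule.span_le.2 ?_) (Submodule.span_le.2 ?_)
  · rintro _ (rfl | ⟨s, -, -, rfl⟩)
    · exact add_mem (Submodule.subset_span ⟨i, rfl⟩) (Submodule.subset_span ⟨j, rfl⟩)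
    · exact Submodule.subset_span ⟨s, rfl⟩
  · rintro _ ⟨s, rfl⟩
    by_cases hsi : s = i
    · exact hsi ▸ hAi
    by_cases hsj : s = j
    · exact hsj ▸ hAj
    exact hA s hsi hsj

lemma card_mul_card_sub_le_ncard_ne {ι α : Type*} [Fintype ι] (f : ι → α) {β : ℝ}
    (hf : ∀ a, ({i | f i = a}.ncard : ℝ) ≤ β) :
    (Fintype.card ι : ℝ) * (Fintype.card ι - β) ≤ {p : ι × ι | f p.1 ≠ f p.2}.ncard := by
  classical
  have hfibre : ∀ i, (Fintype.card ι : ℝ) - β ≤ #{t | f t ≠ f i} := by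
    intro i
    have hsplit := card_filter_add_card_filter_not (s := univ) (p := fun t => f t = f i)
    have hi := hf (f i)
    rw [Set.ncard_eq_toFinset_card', Set.toFinset_ofPred] at hi
    rw [card_univ] at hsplit
    have : (#{t | f t = f i} : ℝ) + #{t | f t ≠ f i} = Fintype.card ι := by exact_mod_cast hsplit
    linarith
  calc (Fintype.card ι : ℝ) * (Fintype.card ι - β) = ∑ i : ι, ((Fintype.card ι : ℝ) - β) := by
        rw [sum_const, card_univ, nsmul_eq_mul]
    _ ≤ ∑ i, (#{t | f t ≠ f i} : ℝ) := sum_le_sum fun i _ => hfibre i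
    _ = {p : ι × ι | f p.1 ≠ f p.2}.ncard := by
      rw [Set.ncard_eq_toFinset_card', Set.toFinset_ofPred, card_filter, Fintype.sum_prod_type]
      simp [card_filter, eq_comm]

lemma exists_vecMul_eq_zero_of_rank_lt {K m : Type*} [Field K] [Fintype m] [DecidableEq m]
    {A : Matrix m m K} (h : A.rank < Fintype.card m) : ∃ y ≠ 0, y ᵥ* A = 0 :=
  exists_vecMul_eq_zero_iff.2 <| by_contra fun hdet => h.ne (rank_of_det_ne_zero hdet)

theorem stmt_7_general (n d : ℕ) (hdn : d < n) (β : ℝ) (hβ : β ≤ n)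
    (A : Matrix (Fin n) (Fin n) ℝ)
    (hdel : Delocalized β A) (hrk : A.rank ≤ n - 1) :
    ((n : ℝ) - β) ^ 2 ≤
      ({p : Fin n × Fin n | p.1 ≠ p.2 ∧
          LinearMap.ker A.mulVecLin = perp (rowSpanF A p.1 p.2)}.ncard : ℝ) := by
  obtain ⟨y, hy0, hy⟩ := exists_vecMul_eq_zero_of_rank_lt (A := A)
    (by rw [Fintype.card_fin]; omega)
  have hlevel : ∀ lam, ({t | y t = lam}.ncard : ℝ) ≤ β :=
    hdel y hy0 (Or.inr (by rw [LinearMap.mem_ker, mulVecLin_apply, mulVec_transpose, hy]))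
  have hβ0 : 0 ≤ β := (Nat.cast_nonneg _).trans (hlevel 0)
  have hpairs : {p : Fin n × Fin n | y p.1 ≠ y p.2} ⊆
      {p | p.1 ≠ p.2 ∧ LinearMap.ker A.mulVecLin = perp (rowSpanF A p.1 p.2)} := fun p hp =>
    ⟨ne_of_apply_ne y hp, by rw [ker_mulVecLin_eq_perp_span_rows, rowSpanF_eq_span_rows hy hp]⟩
  have hcount := card_mul_card_sub_le_ncard_ne y hlevel
  rw [Fintype.card_fin] at hcount
  calc ((n : ℝ) - β) ^ 2 ≤ n * (n - β) := by nlinarith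
    _ ≤ _ := hcount
    _ ≤ _ := by exact_mod_cast Set.ncard_le_ncard hpairs (Set.toFinite _)

/-- for a singular β-delocalized matrix, `|K_A| ≥ (n - β)²`. -/
theorem stmt_7 (n d : ℕ) (hd : 0 < d) (hdn : d < n) (β : ℝ) (hβ : β ≤ n)
    (A : Matrix (Fin n) (Fin n) ℝ) (hA : IsRegAdj n d A)
    (hdel : Delocalized β A) (hrk : A.rank ≤ n - 1) :
    ((n : ℝ) - β) ^ 2 ≤
      ({p : Fin n × Fin n | p.1 ≠ p.2 ∧
          LinearMap.ker A.mulVecLin = perp (rowSpanF A p.1 p.2)}.ncard : ℝ) :=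
  stmt_7_general n d hdn β hβ A hdel hrk
end

section
/- Let d < n be positive integers, let β ≥ 0, let A ∈ 𝒜_{n,d} be β-delocalized with rank A ≤ n−1, and let x ∈ ker A be nonzero. Then the number of quadruples (i,j,k,ℓ) ∈ F_A with x_k = x_ℓ is at most n·β·d². -/
open Matrix

/-- the number of `x`-bad switchings is at most `n β d²`. -/
theorem stmt_8 (n d : ℕ) (hd : 0 < d) (hdn : d < n) (β : ℝ) (hβ : 0 ≤ β)
    (A : Matrix (Fin n) (Fin n) ℝ) (hA : IsRegAdj n d A)
    (hdel : Delocalized β A) (hrk : A.rank ≤ n - 1)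
    (x : Fin n → ℝ) (hx : x ∈ LinearMap.ker A.mulVecLin) (hx0 : x ≠ 0) :
    ({q : Fin n × Fin n × Fin n × Fin n |
        CanSwitch A q.1 q.2.1 q.2.2.1 q.2.2.2 ∧ x q.2.2.1 = x q.2.2.2}.ncard : ℝ) ≤
      n * β * d ^ 2 := by
  classical
  -- Finset versions of the hypotheses
  have hcol : ∀ k : Fin n, (Finset.univ.filter fun i => A i k = 1).card = d := by
    intro k
    have := hA.2.2 k
    rwa [Set.ncard_eq_toFinset_card', Set.toFinset_setOf] at this
  have hlevel : ∀ lam : ℝ, ((Finset.univ.filter fun i : Fin n => x i = lam).card : ℝ) ≤ β := by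
    intro lam
    have := hdel x hx0 (Or.inl hx) lam
    rwa [Set.ncard_eq_toFinset_card', Set.toFinset_setOf] at this
  set T : Finset (Fin n × Fin n × Fin n × Fin n) :=
    Finset.univ.filter (fun q => A q.1 q.2.2.1 = 1 ∧ A q.2.1 q.2.2.2 = 1 ∧
      x q.2.2.1 = x q.2.2.2) with hT
  set P : Finset (Fin n × Fin n) :=
    Finset.univ.filter (fun p => x p.1 = x p.2) with hP
  -- the bad set is contained in T
  have h1 : ({q : Fin n × Fin n × Fin n × Fin n |
      CanSwitch A q.1 q.2.1 q.2.2.1 q.2.2.2 ∧ x q.2.2.1 = x q.2.2.2}.ncard : ℕ) ≤ T.card := by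
    rw [← Set.ncard_coe_finset T]
    refine Set.ncard_le_ncard ?_ (Set.toFinite _)
    intro q hq
    simp only [Set.mem_setOf_eq, CanSwitch] at hq
    simp only [hT, Finset.coe_filter, Set.mem_setOf_eq, Finset.mem_univ, true_and]
    exact ⟨hq.1.1, hq.1.2.1, hq.2⟩
  -- fibers of T over (k,l) have size ≤ d^2
  have h2 : T.card ≤ d ^ 2 * P.card := by
    have himg : T.image (fun q => (q.2.2.1, q.2.2.2)) ⊆ P := by
      intro p hp
      simp only [Finset.mem_image] at hp
      obtain ⟨q, hq, rfl⟩ := hp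
      simp only [hT, Finset.mem_filter] at hq
      simp only [hP, Finset.mem_filter, Finset.mem_univ, true_and]
      exact hq.2.2.2
    calc T.card ≤ d ^ 2 * (T.image (fun q => (q.2.2.1, q.2.2.2))).card := by
          apply Finset.card_le_mul_card_image
          intro p _
          have hsub : (T.filter fun q => (q.2.2.1, q.2.2.2) = p).card ≤
              ((Finset.univ.filter fun i => A i p.1 = 1) ×ˢ
               (Finset.univ.filter fun j => A j p.2 = 1)).card := by
            apply Finset.card_le_card_of_injOn (fun q => (q.1, q.2.1))
            · intro q hq
              simp only [Finset.mem_coe, Finset.mem_filter, hT] at hq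
              obtain ⟨⟨_, h1, h2, _⟩, hkl⟩ := hq
              have hk : q.2.2.1 = p.1 := congrArg Prod.fst hkl
              have hl : q.2.2.2 = p.2 := congrArg Prod.snd hkl
              simp only [Finset.mem_coe, Finset.mem_product, Finset.mem_filter, Finset.mem_univ, true_and]
              exact ⟨hk ▸ h1, hl ▸ h2⟩
            · intro q hq q' hq' hqq
              simp only [Finset.mem_coe, Finset.mem_filter] at hq hq'
              have hqq' : (q.1, q.2.1) = (q'.1, q'.2.1) := hqq
              have e1 : q.1 = q'.1 := (Prod.ext_iff.mp hqq').1
              have e2 : q.2.1 = q'.2.1 := (Prod.ext_iff.mp hqq').2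
              have e3 : q.2.2 = q'.2.2 := by
                have := hq.2.trans hq'.2.symm
                exact Prod.ext (Prod.ext_iff.mp this).1 (Prod.ext_iff.mp this).2
              exact Prod.ext e1 (Prod.ext e2 e3)
          rw [Finset.card_product, hcol p.1, hcol p.2, ← pow_two] at hsub
          exact hsub
      _ ≤ d ^ 2 * P.card := Nat.mul_le_mul_left _ (Finset.card_le_card himg)
  -- (P.card : ℝ) ≤ n * β
  have h3 : (P.card : ℝ) ≤ n * β := by
    have hfib : P.card = ∑ k : Fin n, (P.filter fun p => p.1 = k).card := by
      apply Finset.card_eq_sum_card_fiberwise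
      intro p _; exact Finset.mem_univ _
    have hfb : ∀ k : Fin n, ((P.filter fun p => p.1 = k).card : ℝ) ≤ β := by
      intro k
      refine le_trans ?_ (hlevel (x k))
      have : (P.filter fun p => p.1 = k).card ≤
          (Finset.univ.filter fun l : Fin n => x l = x k).card := by
        apply Finset.card_le_card_of_injOn (fun p => p.2)
        · intro p hp
          simp only [Finset.mem_coe, Finset.mem_filter, hP] at hp
          obtain ⟨⟨_, hx1⟩, hk⟩ := hp
          simp only [Finset.mem_coe, Finset.mem_filter, Finset.mem_univ, true_and]
          rw [← hx1, hk]
        · intro p hp p' hp' hpp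
          simp only [Finset.mem_coe, Finset.mem_filter] at hp hp'
          exact Prod.ext (hp.2.trans hp'.2.symm) hpp
      exact_mod_cast this
    calc (P.card : ℝ) = ∑ k : Fin n, ((P.filter fun p => p.1 = k).card : ℝ) := by
          rw [hfib]; push_cast; ring
      _ ≤ ∑ _k : Fin n, β := Finset.sum_le_sum fun k _ => hfb k
      _ = n * β := by simp [mul_comm]
  -- combine
  have h4 : (T.card : ℝ) ≤ (d ^ 2 : ℝ) * P.card := by exact_mod_cast h2
  calc ({q : Fin n × Fin n × Fin n × Fin n |
        CanSwitch A q.1 q.2.1 q.2.2.1 q.2.2.2 ∧ x q.2.2.1 = x q.2.2.2}.ncard : ℝ)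
      ≤ (T.card : ℝ) := by exact_mod_cast h1
    _ ≤ (d ^ 2 : ℝ) * P.card := h4
    _ ≤ (d ^ 2 : ℝ) * (n * β) := by
        apply mul_le_mul_of_nonneg_left h3 (by positivity)
    _ = n * β * d ^ 2 := by ring
end

section
/- Let n ≥ 2d be positive integers with d ≥ 1, let β be a real number with β ≤ n/4 and β² ≥ 2dn, and let A ∈ 𝒜_{n,d} be β-delocalized with rank A ≤ n−1. Then the number of quadruples (i,j,k,ℓ) ∈ F_A such that the matrix Ā obtained from A by the switching in (i,j,k,ℓ) satisfies rank Ā = rank A + 1 is at least n(n − 3β)d². -/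
open Matrix

/-!
A switching at `(i, j, k, l)` is the rank-one update `A + (eᵢ - eⱼ)(eₗ - eₖ)ᵀ`. If `A x = 0` and
`yᵀ A = 0` with `x k ≠ x l` and `y i ≠ y j`, then `eᵢ - eⱼ` lies in the column space of the updated
matrix but not in that of `A`, so the rank goes up by one. Among the `n²d²` pairs of ones
`A i k = A j l = 1`, at most `2nd³` are not switchable (`A i l = 1` or `A j k = 1`), and by
delocalization of `x` and `y` at most `2nd²β` have `x k = x l` or `y i = y j`. Finally
`2dn ≤ β² ≤ βn/4` gives `β ≥ 8d`, so the loss `2nd³ + 2nd²β` is at most `3nd²β`.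
-/

open Finset

section RankOneUpdate
variable {m n K : Type*} [Fintype n] [Field K]

theorem Matrix.range_mulVecLin_add_vecMulVec (A : Matrix m n K) (u : m → K) {v x : n → K}
    (hx : A *ᵥ x = 0) (hvx : v ⬝ᵥ x ≠ 0) :
    LinearMap.range (A + vecMulVec u v).mulVecLin =
      LinearMap.range A.mulVecLin ⊔ Submodule.span K {u} := by
  have hmulVec (z : n → K) : (A + vecMulVec u v) *ᵥ z = A *ᵥ z + (v ⬝ᵥ z) • u := by
    rw [add_mulVec, vecMulVec_mulVec, op_smul_eq_smul]
  have hu : u ∈ LinearMap.range (A + vecMulVec u v).mulVecLin :=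
    ⟨(v ⬝ᵥ x)⁻¹ • x, by
      rw [mulVecLin_apply, hmulVec, mulVec_smul, hx, smul_zero, zero_add, dotProduct_smul,
        smul_eq_mul, inv_mul_cancel₀ hvx, one_smul]⟩
  apply le_antisymm
  · rintro _ ⟨z, rfl⟩
    rw [mulVecLin_apply, hmulVec]
    exact Submodule.add_mem_sup (LinearMap.mem_range_self _ z)
      (Submodule.smul_mem _ _ (Submodule.mem_span_singleton_self u))
  · refine sup_le ?_ ((Submodule.span_singleton_le_iff_mem _ _).mpr hu)
    rintro _ ⟨z, rfl⟩
    rw [mulVecLin_apply, eq_sub_of_add_eq (hmulVec z).symm]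
    exact Submodule.sub_mem _ (LinearMap.mem_range_self _ z) (Submodule.smul_mem _ _ hu)

theorem Matrix.rank_add_vecMulVec_of_mulVec_eq_zero [Fintype m] (A : Matrix m n K)
    {u : m → K} {v x : n → K} {y : m → K} (hx : A *ᵥ x = 0) (hy : y ᵥ* A = 0)
    (hvx : v ⬝ᵥ x ≠ 0) (hyu : y ⬝ᵥ u ≠ 0) :
    (A + vecMulVec u v).rank = A.rank + 1 := by
  have hu : u ∉ LinearMap.range A.mulVecLin := by
    rintro ⟨z, rfl⟩
    exact hyu (by rw [mulVecLin_apply, dotProduct_mulVec, hy, zero_dotProduct])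
  rw [rank, rank, range_mulVecLin_add_vecMulVec A u hx hvx,
    Submodule.finrank_sup_span_singleton hu]

theorem Matrix.exists_mulVec_eq_zero_of_rank_lt [DecidableEq n] {A : Matrix n n K}
    (h : A.rank < Fintype.card n) : ∃ x ≠ 0, A *ᵥ x = 0 :=
  exists_mulVec_eq_zero_iff.mpr (by_contra fun hdet => h.ne (rank_of_det_ne_zero hdet))

end RankOneUpdate

section EdgePairSums
variable {ι R : Type*} [Fintype ι] [CommSemiring R] {A : Matrix ι ι R} {d : R}

theorem sum_mul_mul_eq_sq_mul_sum_of_col_sum (hcol : ∀ k, ∑ i, A i k = d) (g : ι → ι → R) :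
    ∑ i, ∑ j, ∑ k, ∑ l, A i k * A j l * g k l = d ^ 2 * ∑ k, ∑ l, g k l := by
  rw [sum_congr rfl fun i _ => sum_comm_cycle.symm, ← sum_comm_cycle]
  simp only [← sum_mul, ← sum_mul_sum, hcol, mul_sum, sq]

theorem sum_mul_mul_eq_sq_mul_sum_of_row_sum (hrow : ∀ i, ∑ k, A i k = d) (g : ι → ι → R) :
    ∑ i, ∑ j, ∑ k, ∑ l, A i k * A j l * g i j = d ^ 2 * ∑ i, ∑ j, g i j := by
  simp only [← sum_mul, ← sum_mul_sum, hrow, mul_sum, sq]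

theorem sum_mul_mul_apply_row_eq (hrow : ∀ i, ∑ k, A i k = d)
    (hcol : ∀ k, ∑ i, A i k = d) :
    ∑ i, ∑ j, ∑ k, ∑ l, A i k * A j l * A i l = Fintype.card ι * d ^ 3 := by
  rw [sum_congr rfl fun i _ => sum_comm_cycle.symm]
  simp only [← sum_mul, ← mul_sum, hcol, hrow, sum_const, card_univ, nsmul_eq_mul]
  ring

theorem sum_mul_mul_apply_col_eq (hrow : ∀ i, ∑ k, A i k = d)
    (hcol : ∀ k, ∑ i, A i k = d) :
    ∑ i, ∑ j, ∑ k, ∑ l, A i k * A j l * A j k = Fintype.card ι * d ^ 3 := by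
  rw [sum_comm, sum_congr rfl fun j _ => sum_comm_cycle.symm]
  simp only [← sum_mul, ← mul_sum, hcol, hrow, sum_const, card_univ, nsmul_eq_mul]
  ring

end EdgePairSums

theorem sum_eq_ncard_of_forall_eq_zero_or_eq_one {ι : Type*} [Fintype ι] {f : ι → ℝ}
    (hf : ∀ i, f i = 0 ∨ f i = 1) : ∑ i, f i = {i | f i = 1}.ncard := by
  classical
  rw [Set.ncard_eq_toFinset_card', Set.toFinset_ofPred, natCast_card_filter]
  refine sum_congr rfl fun i _ => ?_
  rcases hf i with h | h <;> simp [h]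

theorem sum_sum_ite_eq_le_of_ncard_le {ι α : Type*} [Fintype ι] [DecidableEq α] (x : ι → α)
    {β : ℝ} (h : ∀ a, ({i | x i = a}.ncard : ℝ) ≤ β) :
    ∑ k, ∑ l, (if x k = x l then 1 else 0 : ℝ) ≤ Fintype.card ι * β := by
  calc ∑ k, ∑ l, (if x k = x l then 1 else 0 : ℝ) ≤ ∑ _k : ι, β := by
        refine sum_le_sum fun k _ => ?_
        simpa [sum_boole, Set.ncard_eq_toFinset_card', Set.toFinset_ofPred, eq_comm] using h (x k)
    _ = Fintype.card ι * β := by simp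

theorem ncard_setOf_eq_sum_sum_sum_sum {ι : Type*} [Fintype ι] (p : ι × ι × ι × ι → Prop)
    [DecidablePred p] :
    ({q | p q}.ncard : ℝ) = ∑ i, ∑ j, ∑ k, ∑ l, if p (i, j, k, l) then 1 else 0 := by
  rw [Set.ncard_eq_toFinset_card', Set.toFinset_ofPred, natCast_card_filter]
  simp only [Fintype.sum_prod_type]

namespace IsRegAdj
variable {n d : ℕ} {A : Matrix (Fin n) (Fin n) ℝ}

theorem sum_row (hA : IsRegAdj n d A) (i : Fin n) : ∑ k, A i k = d := by
  rw [sum_eq_ncard_of_forall_eq_zero_or_eq_one (hA.1 i), hA.2.1 i]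

theorem sum_col (hA : IsRegAdj n d A) (k : Fin n) : ∑ i, A i k = d := by
  rw [sum_eq_ncard_of_forall_eq_zero_or_eq_one (hA.1 · k), hA.2.2 k]

end IsRegAdj

theorem Delocalized.one_le {n : ℕ} {β : ℝ} {A : Matrix (Fin n) (Fin n) ℝ} (hdel : Delocalized β A)
    {x : Fin n → ℝ} (hx0 : x ≠ 0) (hx : A *ᵥ x = 0) : 1 ≤ β := by
  obtain ⟨i, -⟩ := Function.ne_iff.mp hx0
  have hpos : 0 < {s | x s = x i}.ncard := (Set.ncard_pos (Set.toFinite _)).mpr ⟨i, rfl⟩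
  exact le_trans (by exact_mod_cast hpos) (hdel x hx0 (Or.inl hx) (x i))

section Switching
variable {n : ℕ} {A : Matrix (Fin n) (Fin n) ℝ} {i j k l : Fin n}

theorem switch_eq_add_vecMulVec (h : CanSwitch A i j k l) :
    switch A i j k l = A + vecMulVec ((Pi.single i 1 : Fin n → ℝ) - Pi.single j 1)
      ((Pi.single l 1 : Fin n → ℝ) - Pi.single k 1) := by
  obtain ⟨h1, h2, h3, h4⟩ := h
  ext s t
  simp only [switch, of_apply, Matrix.add_apply, vecMulVec_apply, Pi.sub_apply, Pi.single_apply]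
  rcases eq_or_ne s i with rfl | hsi <;> rcases eq_or_ne s j with rfl | hsj <;>
    rcases eq_or_ne t k with rfl | htk <;> rcases eq_or_ne t l with rfl | htl <;>
    simp_all

theorem rank_switch_eq_rank_add_one (h : CanSwitch A i j k l) {x y : Fin n → ℝ}
    (hx : A *ᵥ x = 0) (hy : y ᵥ* A = 0) (hxkl : x k ≠ x l) (hyij : y i ≠ y j) :
    (switch A i j k l).rank = A.rank + 1 := by
  rw [switch_eq_add_vecMulVec h]
  refine rank_add_vecMulVec_of_mulVec_eq_zero A hx hy ?_ ?_
  · simpa [sub_dotProduct, sub_eq_zero] using hxkl.symm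
  · simpa [dotProduct_sub, sub_eq_zero] using hyij

end Switching

def IsRankIncreasingSwitch {n : ℕ} (A : Matrix (Fin n) (Fin n) ℝ) (i j k l : Fin n) : Prop :=
  CanSwitch A i j k l ∧ (switch A i j k l).rank = A.rank + 1

section Counting
variable {n d : ℕ} {β : ℝ} {A : Matrix (Fin n) (Fin n) ℝ} {x y : Fin n → ℝ}

open Classical in
theorem mul_le_ite_isRankIncreasingSwitch_add (hA : ∀ s t, A s t = 0 ∨ A s t = 1)
    (hx : A *ᵥ x = 0) (hy : y ᵥ* A = 0) (i j k l : Fin n) :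
    A i k * A j l ≤ (if IsRankIncreasingSwitch A i j k l then 1 else 0)
      + A i k * A j l * A i l + A i k * A j l * A j k
      + A i k * A j l * (if x k = x l then 1 else 0)
      + A i k * A j l * (if y i = y j then 1 else 0) := by
  have hA0 (s t : Fin n) : 0 ≤ A s t := by rcases hA s t with h | h <;> simp [h]
  have hite (p : Prop) [Decidable p] : (0 : ℝ) ≤ if p then 1 else 0 := by split_ifs <;> norm_num
  rcases hA i k with hik | hik
  · simp [hik, hite]
  rcases hA j l with hjl | hjl
  · simp [hjl, hite]
  simp only [hik, hjl, one_mul]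
  by_cases hgood : IsRankIncreasingSwitch A i j k l
  · simp only [hgood, if_true]
    linarith [hA0 i l, hA0 j k, hite (x k = x l), hite (y i = y j)]
  have hbad : A i l = 1 ∨ A j k = 1 ∨ x k = x l ∨ y i = y j := by
    by_contra! hbad
    have hsw : CanSwitch A i j k l :=
      ⟨hik, hjl, (hA i l).resolve_right hbad.1, (hA j k).resolve_right hbad.2.1⟩
    exact hgood ⟨hsw, rank_switch_eq_rank_add_one hsw hx hy hbad.2.2.1 hbad.2.2.2⟩
  rcases hbad with h | h | h | h <;> simp only [h, if_true] <;>
    linarith [hA0 i l, hA0 j k, hite (x k = x l), hite (y i = y j),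
      hite (IsRankIncreasingSwitch A i j k l)]

theorem sq_mul_sq_le_ncard_isRankIncreasingSwitch (hA : IsRegAdj n d A) (hdel : Delocalized β A)
    (hx0 : x ≠ 0) (hx : A *ᵥ x = 0) (hy0 : y ≠ 0) (hy : Aᵀ *ᵥ y = 0) :
    (n : ℝ) ^ 2 * d ^ 2 ≤ ({q : Fin n × Fin n × Fin n × Fin n |
        IsRankIncreasingSwitch A q.1 q.2.1 q.2.2.1 q.2.2.2}.ncard : ℝ)
      + 2 * n * d ^ 3 + 2 * n * d ^ 2 * β := by
  classical
  have hxlevel := sum_sum_ite_eq_le_of_ncard_le x (hdel x hx0 (Or.inl hx))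
  have hylevel := sum_sum_ite_eq_le_of_ncard_le y (hdel y hy0 (Or.inr hy))
  rw [Fintype.card_fin] at hxlevel hylevel
  rw [mulVec_transpose] at hy
  have hedges := sum_mul_mul_eq_sq_mul_sum_of_col_sum hA.sum_col fun _ _ => (1 : ℝ)
  simp only [mul_one, sum_const, card_univ, Fintype.card_fin, nsmul_eq_mul] at hedges
  have key : ∑ i, ∑ j, ∑ k, ∑ l, A i k * A j l ≤ ∑ i, ∑ j, ∑ k, ∑ l,
      ((if IsRankIncreasingSwitch A i j k l then 1 else 0)
        + A i k * A j l * A i l + A i k * A j l * A j k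
        + A i k * A j l * (if x k = x l then 1 else 0)
        + A i k * A j l * (if y i = y j then 1 else 0)) := by
    gcongr with i _ j _ k _ l _
    exact mul_le_ite_isRankIncreasingSwitch_add hA.1 hx hy i j k l
  simp only [sum_add_distrib] at key
  rw [hedges, sum_mul_mul_apply_row_eq hA.sum_row hA.sum_col,
    sum_mul_mul_apply_col_eq hA.sum_row hA.sum_col,
    sum_mul_mul_eq_sq_mul_sum_of_col_sum hA.sum_col,
    sum_mul_mul_eq_sq_mul_sum_of_row_sum hA.sum_row,
    Fintype.card_fin] at key
  rw [ncard_setOf_eq_sum_sum_sum_sum]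
  linarith [mul_le_mul_of_nonneg_left hxlevel (sq_nonneg (d : ℝ)),
    mul_le_mul_of_nonneg_left hylevel (sq_nonneg (d : ℝ))]

end Counting

theorem stmt_11_general (n d : ℕ) (β : ℝ)
    (hβ : β ≤ n / 4) (hβ2 : 2 * d * n ≤ β ^ 2)
    (A : Matrix (Fin n) (Fin n) ℝ) (hA : IsRegAdj n d A)
    (hdel : Delocalized β A) (hrk : A.rank ≤ n - 1) :
    (n : ℝ) * ((n : ℝ) - 3 * β) * d ^ 2 ≤
      ({q : Fin n × Fin n × Fin n × Fin n |
          CanSwitch A q.1 q.2.1 q.2.2.1 q.2.2.2 ∧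
          (switch A q.1 q.2.1 q.2.2.1 q.2.2.2).rank = A.rank + 1}.ncard : ℝ) := by
  rcases Nat.eq_zero_or_pos n with rfl | hn
  · simp
  obtain ⟨x, hx0, hx⟩ :=
    exists_mulVec_eq_zero_of_rank_lt (A := A) (by rw [Fintype.card_fin]; omega)
  obtain ⟨y, hy0, hy⟩ :=
    exists_mulVec_eq_zero_of_rank_lt (A := Aᵀ) (by rw [rank_transpose, Fintype.card_fin]; omega)
  have hβ0 : 0 ≤ β := zero_le_one.trans (hdel.one_le hx0 hx)
  have hcount := sq_mul_sq_le_ncard_isRankIncreasingSwitch hA hdel hx0 hx hy0 hy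
  have hβn : (n : ℝ) * (8 * d) ≤ n * β := by linarith [mul_le_mul_of_nonneg_left hβ hβ0]
  have hslack : 0 ≤ (n : ℝ) * (β - 2 * d) := by
    linarith [(by positivity : (0 : ℝ) ≤ n * d)]
  unfold IsRankIncreasingSwitch at hcount
  linarith [mul_nonneg (sq_nonneg (d : ℝ)) hslack]

/-- at least `n (n - 3β) d²` switchings increase the rank by one. -/
theorem stmt_11 (n d : ℕ) (hd : 1 ≤ d) (hn : 2 * d ≤ n) (β : ℝ)
    (hβ : β ≤ n / 4) (hβ2 : 2 * d * n ≤ β ^ 2)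
    (A : Matrix (Fin n) (Fin n) ℝ) (hA : IsRegAdj n d A)
    (hdel : Delocalized β A) (hrk : A.rank ≤ n - 1) :
    (n : ℝ) * ((n : ℝ) - 3 * β) * d ^ 2 ≤
      ({q : Fin n × Fin n × Fin n × Fin n |
          CanSwitch A q.1 q.2.1 q.2.2.1 q.2.2.2 ∧
          (switch A q.1 q.2.1 q.2.2.1 q.2.2.2).rank = A.rank + 1}.ncard : ℝ) :=
  stmt_11_general n d β hβ hβ2 A hA hdel hrk
end

section
/- Let n ≥ 2d be positive integers with d ≥ 1, let β be a real number with β ≤ n/4 and β² ≥ 2dn, and let A ∈ 𝒜_{n,d} be β-delocalized with rank A = n−1. Then the number of distinct matrices Ā of full rank n that can be obtained from A by a simple switching is at least n(n − 3β)d²/2. -/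
/-!
A simple switching adds to `A` the rank-one matrix `(eᵢ - eⱼ)(eₗ - eₖ)ᵀ`. If `x` spans the left
kernel of the corank-one matrix `A` and `A z = 0`, the switched matrix is therefore invertible as
soon as `xᵢ ≠ xⱼ` and `zₖ ≠ zₗ`. Of the `n²d²` pairs of ones `(i, k), (j, l)`, at most `2nd³`
make the switching impossible and, by delocalization, at most `2βnd²` violate one of these
inequalities. Every switched matrix arises from at most two quadruples, and `β ≥ 2d` (from
`β² ≥ 2dn ≥ 4d²`) absorbs the `2nd³` term.
-/

open Matrix

open Finset

namespace Matrix

variable {ι K : Type*} [Fintype ι] [Field K]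

theorem exists_ker_mulVecLin_eq_span_singleton [Nonempty ι] {A : Matrix ι ι K}
    (hA : A.rank = Fintype.card ι - 1) :
    ∃ z ≠ 0, LinearMap.ker A.mulVecLin = K ∙ z := by
  have hdim : Module.finrank K (LinearMap.ker A.mulVecLin) = 1 := by
    have := LinearMap.finrank_range_add_finrank_ker A.mulVecLin
    rw [Module.finrank_fintype_fun_eq_card] at this
    rw [rank] at hA
    have := Fintype.card_pos (α := ι)
    omega
  obtain ⟨⟨z, hz⟩, hz0, hspan⟩ := finrank_eq_one_iff'.mp hdim
  refine ⟨z, fun h => hz0 (Subtype.ext h), le_antisymm (fun y hy => ?_) ?_⟩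
  · obtain ⟨c, hc⟩ := hspan ⟨y, hy⟩
    exact Submodule.mem_span_singleton.mpr ⟨c, congrArg Subtype.val hc⟩
  · exact (Submodule.span_singleton_le_iff_mem _ _).mpr hz

theorem isUnit_add_vecMulVec [DecidableEq ι] {A : Matrix ι ι K} {x z u v : ι → K}
    (hx : LinearMap.ker Aᵀ.mulVecLin = K ∙ x) (hz : A *ᵥ z = 0)
    (hu : u ⬝ᵥ x ≠ 0) (hv : v ⬝ᵥ z ≠ 0) : IsUnit (A + vecMulVec u v) := by
  refine vecMul_injective_iff_isUnit.mp fun y₁ y₂ hy => sub_eq_zero.mp ?_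
  set y := y₁ - y₂
  have hy0 : y ᵥ* A + (y ⬝ᵥ u) • v = 0 := by
    simp only at hy
    rw [← vecMul_vecMulVec, ← vecMul_add, sub_vecMul, hy, sub_self]
  have hyu : y ⬝ᵥ u = 0 := by
    have := congrArg (· ⬝ᵥ z) hy0
    simp only [add_dotProduct, smul_dotProduct, ← dotProduct_mulVec, hz, dotProduct_zero,
      zero_add, smul_eq_mul, zero_dotProduct] at this
    exact (mul_eq_zero.mp this).resolve_right hv
  have hyA : y ∈ LinearMap.ker Aᵀ.mulVecLin := by
    rwa [hyu, zero_smul, add_zero, ← mulVec_transpose, ← mulVecLin_apply,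
      ← LinearMap.mem_ker] at hy0
  obtain ⟨c, hc⟩ := Submodule.mem_span_singleton.mp (hx ▸ hyA)
  rw [← hc, smul_dotProduct, dotProduct_comm, smul_eq_mul] at hyu
  rw [← hc, (mul_eq_zero.mp hyu).resolve_right hu, zero_smul]

end Matrix

namespace CanSwitch

variable {n : ℕ} {A : Matrix (Fin n) (Fin n) ℝ} {i j k l : Fin n}

theorem row_ne (h : CanSwitch A i j k l) : i ≠ j := by
  rintro rfl
  simpa [h.1] using h.2.2.2

theorem switch_eq_add_vecMulVec (h : CanSwitch A i j k l) :
    switch A i j k l =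
      A + vecMulVec (Pi.single i 1 - Pi.single j 1) (Pi.single l 1 - Pi.single k 1) := by
  obtain ⟨hik, hjl, hil, hjk⟩ := h
  ext s t
  by_cases hsi : s = i <;> by_cases hsj : s = j <;> by_cases htk : t = k <;>
    by_cases htl : t = l <;> simp_all [switch, vecMulVec_apply]

theorem isUnit_switch (h : CanSwitch A i j k l) {x z : Fin n → ℝ}
    (hx : LinearMap.ker Aᵀ.mulVecLin = ℝ ∙ x) (hz : A *ᵥ z = 0)
    (hxij : x i ≠ x j) (hzkl : z k ≠ z l) : IsUnit (switch A i j k l) := by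
  rw [h.switch_eq_add_vecMulVec]
  refine Matrix.isUnit_add_vecMulVec hx hz ?_ ?_ <;>
    simp only [sub_dotProduct, single_dotProduct, one_mul, ne_eq, sub_eq_zero]
  exacts [hxij, hzkl.symm]

theorem apply_eq_one_and_switch_apply_eq_zero_iff (h : CanSwitch A i j k l) (s t : Fin n) :
    (A s t = 1 ∧ switch A i j k l s t = 0) ↔ (s = i ∧ t = k) ∨ (s = j ∧ t = l) := by
  constructor
  · rintro ⟨hA, hB⟩
    by_contra hst
    simp only [switch, of_apply, if_neg hst] at hB
    split_ifs at hB <;> simp_all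
  · rintro (⟨rfl, rfl⟩ | ⟨rfl, rfl⟩)
    exacts [⟨h.1, by simp [switch]⟩, ⟨h.2.1, by simp [switch]⟩]

/-- The two ones that a switching removes already pin down the quadruple. -/
theorem eq_or_eq_swap_of_switch_eq {i' j' k' l' : Fin n} (h : CanSwitch A i j k l)
    (h' : CanSwitch A i' j' k' l') (heq : switch A i j k l = switch A i' j' k' l') :
    (i = i' ∧ j = j' ∧ k = k' ∧ l = l') ∨ (i = j' ∧ j = i' ∧ k = l' ∧ l = k') := by
  have hik := (h'.apply_eq_one_and_switch_apply_eq_zero_iff i k).mp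
    (heq ▸ (h.apply_eq_one_and_switch_apply_eq_zero_iff i k).mpr (.inl ⟨rfl, rfl⟩))
  have hjl := (h'.apply_eq_one_and_switch_apply_eq_zero_iff j l).mp
    (heq ▸ (h.apply_eq_one_and_switch_apply_eq_zero_iff j l).mpr (.inr ⟨rfl, rfl⟩))
  have := h.row_ne
  grind

end CanSwitch

noncomputable def oneEntries {n : ℕ} (A : Matrix (Fin n) (Fin n) ℝ) : Finset (Fin n × Fin n) :=
  {p | A p.1 p.2 = 1}

namespace IsRegAdj

variable {n d : ℕ} {A : Matrix (Fin n) (Fin n) ℝ}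

theorem card_row_s14 (hA : IsRegAdj n d A) (i : Fin n) : #{j | A i j = 1} = d := by
  rw [← hA.2.1 i, ← Set.ncard_coe_finset, coe_filter]
  simp

theorem card_col_s14 (hA : IsRegAdj n d A) (j : Fin n) : #{i | A i j = 1} = d := by
  rw [← hA.2.2 j, ← Set.ncard_coe_finset, coe_filter]
  simp

theorem card_oneEntries_filter_fst (hA : IsRegAdj n d A) (P : Fin n → Prop) [DecidablePred P] :
    #{p ∈ oneEntries A | P p.1} = d * #{i | P i} := by
  rw [card_eq_sum_card_fiberwise (f := Prod.fst) (t := {i | P i})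
    (by intro p; simp +contextual), mul_comm, ← smul_eq_mul, ← sum_const]
  refine sum_congr rfl fun i hi => ?_
  have : {p ∈ oneEntries A | P p.1 ∧ p.1 = i} = {i} ×ˢ ({j | A i j = 1} : Finset _) := by
    ext ⟨s, t⟩
    simp only [oneEntries, mem_filter, mem_univ, true_and, mem_product, mem_singleton] at hi ⊢
    grind
  rw [filter_filter, this, card_product, card_singleton, one_mul, hA.card_row_s14]

theorem card_oneEntries_filter_snd (hA : IsRegAdj n d A) (P : Fin n → Prop) [DecidablePred P] :
    #{p ∈ oneEntries A | P p.2} = d * #{j | P j} := by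
  rw [card_eq_sum_card_fiberwise (f := Prod.snd) (t := {j | P j})
    (by intro p; simp +contextual), mul_comm, ← smul_eq_mul, ← sum_const]
  refine sum_congr rfl fun j hj => ?_
  have : {p ∈ oneEntries A | P p.2 ∧ p.2 = j} = ({i | A i j = 1} : Finset _) ×ˢ {j} := by
    ext ⟨s, t⟩
    simp only [oneEntries, mem_filter, mem_univ, true_and, mem_product, mem_singleton] at hj ⊢
    grind
  rw [filter_filter, this, card_product, card_singleton, mul_one, hA.card_col_s14]

theorem card_oneEntries (hA : IsRegAdj n d A) : #(oneEntries A) = d * n := by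
  simpa using hA.card_oneEntries_filter_fst fun _ => True

end IsRegAdj

section Counting

variable {n d : ℕ} {A : Matrix (Fin n) (Fin n) ℝ} {x z : Fin n → ℝ} {β : ℝ}

-- A pair of ones `e = (i, k)`, `f = (j, l)` of `A` encodes the quadruple `(i, j, k, l)`.
noncomputable def badPartners (A : Matrix (Fin n) (Fin n) ℝ) (x z : Fin n → ℝ)
    (e : Fin n × Fin n) : Finset (Fin n × Fin n) :=
  {f ∈ oneEntries A | A e.1 f.2 = 1 ∨ A f.1 e.2 = 1 ∨ x f.1 = x e.1 ∨ z f.2 = z e.2}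

noncomputable def goodPairs (A : Matrix (Fin n) (Fin n) ℝ) (x z : Fin n → ℝ) :
    Finset ((Fin n × Fin n) × (Fin n × Fin n)) :=
  {q ∈ oneEntries A ×ˢ oneEntries A | q.2 ∉ badPartners A x z q.1}

theorem IsRegAdj.card_badPartners_le (hA : IsRegAdj n d A)
    (hx : ∀ lam, (#{i | x i = lam} : ℝ) ≤ β) (hz : ∀ lam, (#{i | z i = lam} : ℝ) ≤ β)
    (e : Fin n × Fin n) : (#(badPartners A x z e) : ℝ) ≤ 2 * d ^ 2 + 2 * d * β := by
  obtain ⟨i, k⟩ := e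
  have hunion : #(badPartners A x z (i, k)) ≤ #{f ∈ oneEntries A | A i f.2 = 1} +
      #{f ∈ oneEntries A | A f.1 k = 1} + #{f ∈ oneEntries A | x f.1 = x i} +
      #{f ∈ oneEntries A | z f.2 = z k} := by
    simp only [badPartners, filter_or]
    grw [card_union_le, card_union_le, card_union_le]
    omega
  rw [hA.card_oneEntries_filter_snd (A i · = 1), hA.card_oneEntries_filter_fst (A · k = 1),
    hA.card_oneEntries_filter_fst (x · = x i), hA.card_oneEntries_filter_snd (z · = z k),
    hA.card_row_s14, hA.card_col_s14] at hunion
  have hxi := hx (x i)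
  have hzk := hz (z k)
  have hd : (0 : ℝ) ≤ d := d.cast_nonneg
  calc (#(badPartners A x z (i, k)) : ℝ)
      ≤ d * d + d * d + d * #{j | x j = x i} + d * #{l | z l = z k} := by exact_mod_cast hunion
    _ ≤ d * d + d * d + d * β + d * β := by gcongr
    _ = 2 * d ^ 2 + 2 * d * β := by ring

theorem IsRegAdj.card_goodPairs_ge (hA : IsRegAdj n d A)
    (hx : ∀ lam, (#{i | x i = lam} : ℝ) ≤ β) (hz : ∀ lam, (#{i | z i = lam} : ℝ) ≤ β) :
    (d * n : ℝ) * (d * n - 2 * d ^ 2 - 2 * d * β) ≤ #(goodPairs A x z) := by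
  have hpartners : ∀ e, (d * n : ℝ) - (2 * d ^ 2 + 2 * d * β) ≤
      #{f ∈ oneEntries A | f ∉ badPartners A x z e} := fun e => by
    have hsplit := card_sdiff_add_card_eq_card (filter_subset _ _ : badPartners A x z e ⊆ _)
    rw [hA.card_oneEntries, sdiff_eq_filter] at hsplit
    have hsplit' : (#{f ∈ oneEntries A | f ∉ badPartners A x z e} : ℝ) +
        #(badPartners A x z e) = d * n := by
      exact_mod_cast hsplit
    linarith [hA.card_badPartners_le hx hz e]
  calc (d * n : ℝ) * (d * n - 2 * d ^ 2 - 2 * d * β)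
      = ∑ _e ∈ oneEntries A, ((d * n : ℝ) - (2 * d ^ 2 + 2 * d * β)) := by
        rw [sum_const, hA.card_oneEntries, nsmul_eq_mul]; push_cast; ring
    _ ≤ ∑ e ∈ oneEntries A, (#{f ∈ oneEntries A | f ∉ badPartners A x z e} : ℝ) :=
        sum_le_sum fun e _ => hpartners e
    _ = #(goodPairs A x z) := by
        rw [goodPairs, card_filter, sum_product]
        push_cast [card_filter]
        rfl

end Counting

section Switchings

variable {n d : ℕ} {A : Matrix (Fin n) (Fin n) ℝ} {x z : Fin n → ℝ}

theorem IsRegAdj.canSwitch_of_mem_goodPairs (hA : IsRegAdj n d A)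
    {q : (Fin n × Fin n) × (Fin n × Fin n)} (hq : q ∈ goodPairs A x z) :
    CanSwitch A q.1.1 q.2.1 q.1.2 q.2.2 ∧ x q.1.1 ≠ x q.2.1 ∧ z q.1.2 ≠ z q.2.2 := by
  obtain ⟨hpair, hgood⟩ := mem_filter.mp hq
  obtain ⟨hik, hjl⟩ := mem_product.mp hpair
  simp only [badPartners, mem_filter, hjl, true_and, not_or] at hgood
  obtain ⟨hil, hjk, hx, hz⟩ := hgood
  simp only [oneEntries, mem_filter, mem_univ, true_and] at hik hjl
  exact ⟨⟨hik, hjl, (hA.1 _ _).resolve_right hil, (hA.1 _ _).resolve_right hjk⟩,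
    Ne.symm hx, Ne.symm hz⟩

theorem IsRegAdj.card_goodPairs_le (hA : IsRegAdj n d A)
    (hx : LinearMap.ker Aᵀ.mulVecLin = ℝ ∙ x) (hz : A *ᵥ z = 0) :
    #(goodPairs A x z) ≤ 2 * {B : Matrix (Fin n) (Fin n) ℝ | B.rank = n ∧
      ∃ i j k l : Fin n, CanSwitch A i j k l ∧ B = switch A i j k l}.ncard := by
  classical
  set f := fun q : (Fin n × Fin n) × (Fin n × Fin n) => switch A q.1.1 q.2.1 q.1.2 q.2.2
  have hfibre : ∀ B ∈ (goodPairs A x z).image f, #{q ∈ goodPairs A x z | f q = B} ≤ 2 := by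
    simp only [mem_image]
    rintro B ⟨q₀, hq₀, rfl⟩
    refine (card_le_card (t := {q₀, q₀.swap}) fun q hq => ?_).trans card_le_two
    obtain ⟨hq, hfq⟩ := mem_filter.mp hq
    rcases (hA.canSwitch_of_mem_goodPairs hq).1.eq_or_eq_swap_of_switch_eq
      (hA.canSwitch_of_mem_goodPairs hq₀).1 hfq with h | h <;>
    · obtain ⟨⟨⟩, ⟨⟩⟩ := q₀
      obtain ⟨⟨⟩, ⟨⟩⟩ := q
      simp_all
  have himage : ↑((goodPairs A x z).image f) ⊆ {B : Matrix (Fin n) (Fin n) ℝ | B.rank = n ∧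
      ∃ i j k l : Fin n, CanSwitch A i j k l ∧ B = switch A i j k l} := by
    simp only [coe_image, Set.image_subset_iff]
    intro q hq
    obtain ⟨hcan, hxq, hzq⟩ := hA.canSwitch_of_mem_goodPairs hq
    refine ⟨?_, _, _, _, _, hcan, rfl⟩
    simpa using rank_of_isUnit _ (hcan.isUnit_switch hx hz hxq hzq)
  have hfinite : {B : Matrix (Fin n) (Fin n) ℝ | B.rank = n ∧
      ∃ i j k l : Fin n, CanSwitch A i j k l ∧ B = switch A i j k l}.Finite :=
    (Set.finite_range fun q : Fin n × Fin n × Fin n × Fin n =>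
      switch A q.1 q.2.1 q.2.2.1 q.2.2.2).subset
      fun B ⟨_, i, j, k, l, _, hB⟩ => ⟨(i, j, k, l), hB.symm⟩
  calc #(goodPairs A x z) ≤ 2 * #((goodPairs A x z).image f) := card_le_mul_card_image _ 2 hfibre
    _ ≤ _ := by
      grw [← Set.ncard_coe_finset, Set.ncard_le_ncard himage hfinite]

end Switchings

theorem Delocalized.card_level_le {n : ℕ} {β : ℝ} {A : Matrix (Fin n) (Fin n) ℝ}
    (h : Delocalized β A) {x : Fin n → ℝ} (hx0 : x ≠ 0)
    (hx : x ∈ LinearMap.ker A.mulVecLin ∨ x ∈ LinearMap.ker Aᵀ.mulVecLin) (lam : ℝ) :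
    (#{i | x i = lam} : ℝ) ≤ β := by
  simpa [← Set.ncard_coe_finset] using h x hx0 hx lam

theorem stmt_14_general (n d : ℕ) (hn : 2 * d ≤ n) (β : ℝ)
    (hβ2 : 2 * d * n ≤ β ^ 2)
    (A : Matrix (Fin n) (Fin n) ℝ) (hA : IsRegAdj n d A)
    (hdel : Delocalized β A) (hrk : A.rank = n - 1) :
    (n : ℝ) * ((n : ℝ) - 3 * β) * d ^ 2 / 2 ≤
      ({B : Matrix (Fin n) (Fin n) ℝ | B.rank = n ∧
          ∃ i j k l : Fin n, CanSwitch A i j k l ∧ B = switch A i j k l}.ncard : ℝ) := by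
  rcases n.eq_zero_or_pos with rfl | hn0
  · simp
  have : Nonempty (Fin n) := ⟨⟨0, hn0⟩⟩
  obtain ⟨z, hz0, hz⟩ := Matrix.exists_ker_mulVecLin_eq_span_singleton (A := A) (by simpa)
  obtain ⟨x, hx0, hx⟩ :=
    Matrix.exists_ker_mulVecLin_eq_span_singleton (A := Aᵀ) (by simpa [rank_transpose])
  have hzker : z ∈ LinearMap.ker A.mulVecLin := hz ▸ Submodule.mem_span_singleton_self z
  have hxker : x ∈ LinearMap.ker Aᵀ.mulVecLin := hx ▸ Submodule.mem_span_singleton_self x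
  have hxlev := hdel.card_level_le hx0 (.inr hxker)
  have hzlev := hdel.card_level_le hz0 (.inl hzker)
  have hβd : 2 * (d : ℝ) ≤ β := by
    have : (2 * d : ℝ) ≤ n := by exact_mod_cast hn
    nlinarith [Nat.cast_nonneg (α := ℝ) #{i | x i = 0}, hxlev 0]
  have hgood := hA.card_goodPairs_ge hxlev hzlev
  have hswitch := Nat.cast_le (α := ℝ).mpr (hA.card_goodPairs_le hx (by simpa using hzker))
  rw [Nat.cast_mul, Nat.cast_ofNat] at hswitch
  nlinarith [mul_nonneg (by positivity : (0 : ℝ) ≤ n * d ^ 2) (sub_nonneg.mpr hβd)]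

/-- from a β-delocalized matrix of corank one, at least `n (n - 3β) d² / 2`
distinct full-rank matrices can be obtained by a simple switching. -/
theorem stmt_14 (n d : ℕ) (hd : 1 ≤ d) (hn : 2 * d ≤ n) (β : ℝ)
    (hβ : β ≤ n / 4) (hβ2 : 2 * d * n ≤ β ^ 2)
    (A : Matrix (Fin n) (Fin n) ℝ) (hA : IsRegAdj n d A)
    (hdel : Delocalized β A) (hrk : A.rank = n - 1) :
    (n : ℝ) * ((n : ℝ) - 3 * β) * d ^ 2 / 2 ≤
      ({B : Matrix (Fin n) (Fin n) ℝ | B.rank = n ∧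
          ∃ i j k l : Fin n, CanSwitch A i j k l ∧ B = switch A i j k l}.ncard : ℝ) :=
  stmt_14_general n d hn β hβ2 A hA hdel hrk
end

section
/- Let n be a positive integer, let M be a symmetric n×n real matrix, and let d be a real number with 0 < d < n such that M·𝟙 = d·𝟙, where 𝟙 ∈ ℝⁿ is the all-ones vector. Then rank(J_n − M) = rank M, where J_n is the n×n all-ones matrix. In particular, J_n − M is invertible if and only if M is invertible. -/
open Matrix

/-!
If `M` has all column sums `d`, then `𝟙 ⬝ᵥ M x = d · Σ xᵢ`, while `𝟙 ⬝ᵥ J x = n · Σ xᵢ`. So a vector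
killed by `M` (when `d ≠ 0`) or by `J - M` (when `d ≠ n`) has coordinate sum zero, hence is killed
by `J`, and therefore `M` and `J - M` have the same kernel.
-/

namespace Matrix

variable {ι K : Type*} [Fintype ι] [Field K]

lemma of_const_one_mulVec (x : ι → K) : (of fun _ _ : ι => (1 : K)) *ᵥ x = fun _ => ∑ i, x i := by
  ext; simp [mulVec, dotProduct]

lemma ker_mulVecLin_const_one_sub_eq {M : Matrix ι ι K} {d : K}
    (hcol : (fun _ => 1) ᵥ* M = fun _ => d) (hd : d ≠ 0) (hdn : d ≠ Fintype.card ι) :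
    LinearMap.ker ((of fun _ _ : ι => (1 : K)) - M).mulVecLin = LinearMap.ker M.mulVecLin := by
  have one_dotProduct_mulVec (x : ι → K) : (fun _ => 1) ⬝ᵥ M *ᵥ x = d * ∑ i, x i := by
    rw [dotProduct_mulVec, hcol]
    simp [dotProduct, Finset.mul_sum]
  ext x
  simp only [LinearMap.mem_ker, mulVecLin_apply, sub_mulVec, sub_eq_zero, of_const_one_mulVec]
  constructor
  · intro hJ
    have hsum : (Fintype.card ι : K) * ∑ i, x i = d * ∑ i, x i := by
      simpa [← hJ, dotProduct] using one_dotProduct_mulVec x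
    have hzero : ∑ i, x i = 0 := by
      by_contra hs
      exact hdn (mul_right_cancel₀ hs hsum).symm
    rw [← hJ, hzero]; rfl
  · intro hM
    have hzero : ∑ i, x i = 0 := by
      simpa [hM, hd] using one_dotProduct_mulVec x
    rw [hM, hzero]; rfl

lemma rank_eq_of_ker_mulVecLin_eq {m n : Type*} [Fintype n] {A B : Matrix m n K}
    (h : LinearMap.ker A.mulVecLin = LinearMap.ker B.mulVecLin) : A.rank = B.rank := by
  have hA := LinearMap.finrank_range_add_finrank_ker A.mulVecLin
  have hB := LinearMap.finrank_range_add_finrank_ker B.mulVecLin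
  rw [h] at hA
  unfold rank
  omega

lemma isUnit_iff_of_ker_mulVecLin_eq [DecidableEq ι] {A B : Matrix ι ι K}
    (h : LinearMap.ker A.mulVecLin = LinearMap.ker B.mulVecLin) : IsUnit A ↔ IsUnit B := by
  rw [← mulVec_injective_iff_isUnit, ← mulVec_injective_iff_isUnit, ← coe_mulVecLin,
    ← coe_mulVecLin, ← LinearMap.ker_eq_bot, ← LinearMap.ker_eq_bot, h]

end Matrix

/-- for a symmetric matrix with constant row sums `d`, `0 < d < n`, the
matrices `J_n - M` and `M` have the same rank; in particular one is invertible iff the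
other is. -/
theorem stmt_18 (n : ℕ) (M : Matrix (Fin n) (Fin n) ℝ) (hM : M.IsSymm)
    (d : ℝ) (hd : 0 < d) (hdn : d < n)
    (hreg : M.mulVec (fun _ => 1) = fun _ => d) :
    ((Matrix.of fun _ _ : Fin n => (1 : ℝ)) - M).rank = M.rank ∧
    (IsUnit ((Matrix.of fun _ _ : Fin n => (1 : ℝ)) - M) ↔ IsUnit M) := by
  have hcol : (fun _ => 1) ᵥ* M = fun _ => d := by
    rw [← hM.eq, vecMul_transpose, hreg]
  have hker := ker_mulVecLin_const_one_sub_eq hcol hd.ne' (by simpa using hdn.ne)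
  exact ⟨rank_eq_of_ker_mulVecLin_eq hker, isUnit_iff_of_ker_mulVecLin_eq hker⟩
end
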